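/- arXiv:1108.0142 — 5 statements merged into one kernel-verified Lean document; each statement's English description precedes it below -/
import Mathlib

section
/- Let I and J be nonempty sets and 1 ≤ p < ∞. If there exists a doubly stochastic operator D : ℓᵖ(J) → ℓᵖ(I), then I and J have the same cardinality. -/
open scoped ENNReal

/-- The standard basis element `e i` of `ℓᵖ(I)`. -/
noncomputable def stdb (p : ℝ≥0∞) {I : Type*} (i : I) : lp (fun _ : I => ℝ) p :=
  letI := Classical.decEq I
  lp.single p i 1

/-- A bounded linear operator `A : ℓᵖ(J) → ℓᵖ(I)` is positive if `A f ≥ 0` whenever `f ≥ 0`. -/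
def IsPositiveOp {I J : Type*} {p : ℝ≥0∞} [Fact (1 ≤ p)]
    (A : lp (fun _ : J => ℝ) p →L[ℝ] lp (fun _ : I => ℝ) p) : Prop :=
  ∀ f : lp (fun _ : J => ℝ) p, (∀ j, 0 ≤ f j) → ∀ i, 0 ≤ A f i

/-- Row stochastic: positive and each row sum `∑_j ⟨A e_j, e_i⟩` equals 1. -/
def IsRowStochastic {I J : Type*} {p : ℝ≥0∞} [Fact (1 ≤ p)]
    (A : lp (fun _ : J => ℝ) p →L[ℝ] lp (fun _ : I => ℝ) p) : Prop :=
  IsPositiveOp A ∧ ∀ i : I, HasSum (fun j : J => A (stdb p j) i) 1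

/-- Column stochastic: positive and each column sum `∑_i ⟨A e_j, e_i⟩` equals 1. -/
def IsColumnStochastic {I J : Type*} {p : ℝ≥0∞} [Fact (1 ≤ p)]
    (A : lp (fun _ : J => ℝ) p →L[ℝ] lp (fun _ : I => ℝ) p) : Prop :=
  IsPositiveOp A ∧ ∀ j : J, HasSum (fun i : I => A (stdb p j) i) 1

/-- Doubly stochastic: both row and column stochastic. -/
def IsDoublyStochastic {I J : Type*} {p : ℝ≥0∞} [Fact (1 ≤ p)]
    (A : lp (fun _ : J => ℝ) p →L[ℝ] lp (fun _ : I => ℝ) p) : Prop :=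
  IsRowStochastic A ∧ IsColumnStochastic A

/-- `f ≺ g` : `f` is majorized by `g`, i.e. `f = D g` for some doubly stochastic `D`. -/
def Majorized {I : Type*} {p : ℝ≥0∞} [Fact (1 ≤ p)]
    (f g : lp (fun _ : I => ℝ) p) : Prop :=
  ∃ D : lp (fun _ : I => ℝ) p →L[ℝ] lp (fun _ : I => ℝ) p,
    IsDoublyStochastic D ∧ f = D g

/-- `T` preserves majorization if `f ≺ g` implies `T f ≺ T g`. -/
def PreservesMajorization {I : Type*} {p : ℝ≥0∞} [Fact (1 ≤ p)]
    (T : lp (fun _ : I => ℝ) p →L[ℝ] lp (fun _ : I => ℝ) p) : Prop :=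
  ∀ f g : lp (fun _ : I => ℝ) p, Majorized f g → Majorized (T f) (T g)

/-!
The matrix `a i j = ⟨D e_j, e_i⟩` is nonnegative with all row and column sums equal to `1`.
Summing all its entries in `ℝ≥0∞` in both orders gives `|I| = |J|` whenever one side is
finite. When both are infinite, choose for each row `i` a column `f i` with `a i (f i) ≠ 0`:
the fibres of `f` lie in column supports, which are countable since columns are summable, so
`|I| ≤ |J| · ℵ₀ = |J|`; by symmetry `|J| ≤ |I|`.
-/

open Cardinal

universe u v

section DoublyStochasticMatrix

variable {I : Type u} {J : Type v}

theorem ENat.card_eq_of_tsum_rows_cols_eq_one {a : I → J → ℝ≥0∞}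
    (hrow : ∀ i, ∑' j, a i j = 1) (hcol : ∀ j, ∑' i, a i j = 1) :
    ENat.card I = ENat.card J := by
  have h : (ENat.card I : ℝ≥0∞) = ENat.card J :=
    calc (ENat.card I : ℝ≥0∞) = ∑' i, ∑' j, a i j := by simp [hrow, ENNReal.tsum_one]
      _ = ∑' j, ∑' i, a i j := ENNReal.tsum_comm
      _ = ENat.card J := by simp [hcol, ENNReal.tsum_one]
  exact_mod_cast h

theorem Cardinal.lift_mk_le_of_countable_fibers [Infinite J] (f : I → J)
    (hf : ∀ j, (f ⁻¹' {j}).Countable) : lift.{v} #I ≤ lift.{u} #J :=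
  calc lift.{v} #I ≤ lift.{u} #J * ℵ₀ :=
        lift_mk_le_lift_mk_mul_of_lift_mk_preimage_le f fun j =>
          lift_le_aleph0.2 (le_aleph0_iff_set_countable.2 (hf j))
    _ = lift.{u} #J := mul_aleph0_eq (by simp)

theorem Cardinal.lift_mk_le_of_hasSum_rows_of_summable_cols [Infinite J] {a : I → J → ℝ}
    (hrow : ∀ i, HasSum (a i) 1) (hcol : ∀ j, Summable fun i => a i j) :
    lift.{v} #I ≤ lift.{u} #J := by
  have hnz : ∀ i, ∃ j, a i j ≠ 0 := by
    intro i
    by_contra! h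
    have hzero : a i = 0 := funext h
    exact one_ne_zero ((hrow i).unique (by rw [hzero]; exact hasSum_zero))
  choose f hf using hnz
  refine lift_mk_le_of_countable_fibers f fun j => (hcol j).countable_support.mono ?_
  rintro i rfl
  exact hf i

theorem ENNReal.tsum_ofReal_of_hasSum {ι : Type*} {g : ι → ℝ} {r : ℝ} (hg : ∀ k, 0 ≤ g k)
    (hs : HasSum g r) : ∑' k, ENNReal.ofReal (g k) = ENNReal.ofReal r := by
  rw [← ENNReal.ofReal_tsum_of_nonneg hg hs.summable, hs.tsum_eq]

theorem nonempty_equiv_of_doublyStochastic {a : I → J → ℝ} (hnn : ∀ i j, 0 ≤ a i j)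
    (hrow : ∀ i, HasSum (a i) 1) (hcol : ∀ j, HasSum (fun i => a i j) 1) :
    Nonempty (I ≃ J) := by
  have hcard : ENat.card I = ENat.card J :=
    ENat.card_eq_of_tsum_rows_cols_eq_one (a := fun i j => ENNReal.ofReal (a i j))
      (fun i => by rw [ENNReal.tsum_ofReal_of_hasSum (hnn i) (hrow i), ENNReal.ofReal_one])
      (fun j => by rw [ENNReal.tsum_ofReal_of_hasSum (hnn · j) (hcol j), ENNReal.ofReal_one])
  rcases finite_or_infinite I with hI | hI
  · have : Finite J := by rw [← ENat.card_lt_top, ← hcard]; exact ENat.card_lt_top_of_finite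
    rw [ENat.card_eq_coe_natCard, ENat.card_eq_coe_natCard, Nat.cast_inj] at hcard
    exact Finite.card_eq.1 hcard
  · have : Infinite J := by rw [← ENat.card_eq_top, ← hcard]; exact ENat.card_eq_top_of_infinite
    exact lift_mk_eq'.1 <| le_antisymm
      (lift_mk_le_of_hasSum_rows_of_summable_cols hrow fun j => (hcol j).summable)
      (lift_mk_le_of_hasSum_rows_of_summable_cols hcol fun i => (hrow i).summable)

end DoublyStochasticMatrix

theorem stdb_nonneg (p : ℝ≥0∞) {J : Type*} (j j' : J) : 0 ≤ stdb p j j' := by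
  classical
  simp only [stdb, lp.single_apply, Pi.single_apply]
  split_ifs <;> norm_num

theorem stmt0_general {I J : Type*} (p : ℝ≥0∞) [Fact (1 ≤ p)]
    (D : lp (fun _ : J => ℝ) p →L[ℝ] lp (fun _ : I => ℝ) p)
    (hD : IsDoublyStochastic D) : Nonempty (J ≃ I) := by
  obtain ⟨⟨hpos, hrow⟩, -, hcol⟩ := hD
  exact (nonempty_equiv_of_doublyStochastic (a := fun i j => D (stdb p j) i)
    (fun i j => hpos _ (stdb_nonneg p j) i) hrow hcol).map Equiv.symm

/-- If there exists a doubly stochastic operator `D : ℓᵖ(J) → ℓᵖ(I)`, `1 ≤ p < ∞`,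
then `I` and `J` have the same cardinality. -/
theorem stmt0 {I J : Type*} [Nonempty I] [Nonempty J] (p : ℝ≥0∞) [Fact (1 ≤ p)] (hp : p ≠ ∞)
    (D : lp (fun _ : J => ℝ) p →L[ℝ] lp (fun _ : I => ℝ) p)
    (hD : IsDoublyStochastic D) : Nonempty (J ≃ I) :=
  stmt0_general p D hD
end

section
/- Let φ : (a,b) → [0,∞) be a convex function, where −∞ ≤ a < b ≤ +∞, and let f, g ∈ ℓᵖ(I) with ranges contained in (a,b). If f ≺ g (i.e., f = Dg for some doubly stochastic operator D on ℓᵖ(I)), then ∑_{i∈I} φ(f(i)) ≤ ∑_{i∈I} φ(g(i)). -/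
open scoped ENNReal

/-! Row `i` of `D` is a probability vector `(D e_j)(i)` with `f i = ∑ j, D e_j i * g j`, so
summing a supporting line of `φ` at `f i` against it gives the countable Jensen inequality
`φ (f i) ≤ ∑ j, D e_j i * φ (g j)`; as `ENNReal.ofReal` is monotone and subadditive, this needs
no summability on the right. Summing over `i` in `[0, ∞]`, exchanging the order of summation and
using that every column of `D` sums to `1` gives the claim. -/

open Set

theorem ENNReal.ofReal_le_tsum_ofReal_of_hasSum {ι : Type*} {u : ι → ℝ} {s : ℝ}
    (hu : HasSum u s) : ENNReal.ofReal s ≤ ∑' i, ENNReal.ofReal (u i) :=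
  le_of_tendsto' ((ENNReal.continuous_ofReal.tendsto s).comp hu) fun F =>
    (Finset.le_sum_of_subadditive ENNReal.ofReal ENNReal.ofReal_zero.le
      (fun _ _ => ENNReal.ofReal_add_le) F u).trans (ENNReal.sum_le_tsum F)

theorem ConvexOn.exists_affine_le_of_mem_interior {S : Set ℝ} {φ : ℝ → ℝ}
    (hφ : ConvexOn ℝ S φ) {y : ℝ} (hy : y ∈ interior S) :
    ∃ c : ℝ, ∀ x ∈ S, φ y + c * (x - y) ≤ φ x := by
  refine ⟨derivWithin φ (Ioi y) y, fun x hx => ?_⟩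
  rcases lt_trichotomy x y with hxy | rfl | hyx
  · have hslope : slope φ x y ≤ derivWithin φ (Ioi y) y :=
      (hφ.slope_le_leftDeriv_of_mem_interior hx hy hxy).trans
        (hφ.leftDeriv_le_rightDeriv_of_mem_interior hy)
    rw [slope_def_field, div_le_iff₀ (sub_pos.2 hxy)] at hslope
    linarith
  · simp
  · have hslope := hφ.rightDeriv_le_slope_of_mem_interior hy hx hyx
    rw [slope_def_field, le_div_iff₀ (sub_pos.2 hyx)] at hslope
    linarith

theorem ConvexOn.ofReal_map_le_tsum {ι : Type*} {S : Set ℝ} {φ : ℝ → ℝ}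
    (hφ : ConvexOn ℝ S φ) {w x : ι → ℝ} (hw : ∀ i, 0 ≤ w i) (hw1 : HasSum w 1)
    (hx : ∀ i, x i ∈ S) {y : ℝ} (hy : y ∈ interior S) (hwx : HasSum (fun i => w i * x i) y) :
    ENNReal.ofReal (φ y) ≤ ∑' i, ENNReal.ofReal (w i) * ENNReal.ofReal (φ (x i)) := by
  obtain ⟨c, hc⟩ := hφ.exists_affine_le_of_mem_interior hy
  have hsupport : HasSum (fun i => w i * (φ y + c * (x i - y))) (φ y) := by
    have h := (hw1.mul_left (φ y - c * y)).add (hwx.mul_left c)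
    rw [mul_one, sub_add_cancel] at h
    have hterm : (fun i => w i * (φ y + c * (x i - y))) =
        fun i => (φ y - c * y) * w i + c * (w i * x i) := by
      funext i; ring
    rw [hterm]
    exact h
  calc ENNReal.ofReal (φ y)
      ≤ ∑' i, ENNReal.ofReal (w i * (φ y + c * (x i - y))) :=
        ENNReal.ofReal_le_tsum_ofReal_of_hasSum hsupport
    _ ≤ ∑' i, ENNReal.ofReal (w i * φ (x i)) :=
        ENNReal.tsum_le_tsum fun i =>
          ENNReal.ofReal_le_ofReal (mul_le_mul_of_nonneg_left (hc _ (hx i)) (hw i))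
    _ = ∑' i, ENNReal.ofReal (w i) * ENNReal.ofReal (φ (x i)) := by
        simp_rw [ENNReal.ofReal_mul (hw _)]

section StochasticOperator

variable {I J : Type*} {p : ℝ≥0∞} [Fact (1 ≤ p)]

theorem IsPositiveOp.apply_stdb_nonneg
    {A : lp (fun _ : J => ℝ) p →L[ℝ] lp (fun _ : I => ℝ) p} (hA : IsPositiveOp A) (i : I) (j : J) :
    0 ≤ A (stdb p j) i := by
  classical
  refine hA _ (fun k => ?_) i
  rw [stdb, lp.single_apply, Pi.single_apply]
  split_ifs <;> norm_num

theorem hasSum_apply_stdb_mul (hp : p ≠ ∞)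
    (A : lp (fun _ : J => ℝ) p →L[ℝ] lp (fun _ : I => ℝ) p) (g : lp (fun _ : J => ℝ) p) (i : I) :
    HasSum (fun j => A (stdb p j) i * g j) (A g i) := by
  -- `stdb` is built from `lp.single` with the classical decidable equality
  let := Classical.decEq J
  have hsingle (j : J) : lp.single p j (g j) = g j • stdb p j := by
    rw [stdb, ← lp.single_smul, smul_eq_mul, mul_one]
  have h := (lp.hasSum_single hp g).mapL ((lp.evalCLM ℝ _ p i).comp A)
  simp only [hsingle, map_smul, ContinuousLinearMap.comp_apply, smul_eq_mul, mul_comm (g _)] at h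
  exact h

end StochasticOperator

theorem stmt9_general {I : Type*} (p : ℝ≥0∞) [Fact (1 ≤ p)] (hp : p ≠ ∞)
    (a b : EReal) (φ : ℝ → ℝ)
    (hconv : ConvexOn ℝ {x : ℝ | a < (x : EReal) ∧ (x : EReal) < b} φ)
    (f g : lp (fun _ : I => ℝ) p)
    (hf : ∀ i, a < (f i : EReal) ∧ (f i : EReal) < b)
    (hg : ∀ i, a < (g i : EReal) ∧ (g i : EReal) < b)
    (hfg : Majorized f g) :
    ∑' i : I, ENNReal.ofReal (φ (f i)) ≤ ∑' i : I, ENNReal.ofReal (φ (g i)) := by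
  obtain ⟨D, ⟨⟨hpos, hrow⟩, -, hcol⟩, rfl⟩ := hfg
  have hopen : IsOpen {x : ℝ | a < (x : EReal) ∧ (x : EReal) < b} :=
    (isOpen_Ioi.inter isOpen_Iio).preimage continuous_coe_real_ereal
  have jensen (i : I) : ENNReal.ofReal (φ (D g i)) ≤
      ∑' j, ENNReal.ofReal (D (stdb p j) i) * ENNReal.ofReal (φ (g j)) :=
    hconv.ofReal_map_le_tsum (hpos.apply_stdb_nonneg i) (hrow i) hg
      (hopen.interior_eq.symm ▸ hf i) (hasSum_apply_stdb_mul hp D g i)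
  calc ∑' i, ENNReal.ofReal (φ (D g i))
      ≤ ∑' i, ∑' j, ENNReal.ofReal (D (stdb p j) i) * ENNReal.ofReal (φ (g j)) :=
        ENNReal.tsum_le_tsum jensen
    _ = ∑' j, (∑' i, ENNReal.ofReal (D (stdb p j) i)) * ENNReal.ofReal (φ (g j)) := by
        rw [ENNReal.tsum_comm]
        simp_rw [ENNReal.tsum_mul_right]
    _ = ∑' j, ENNReal.ofReal (φ (g j)) := by
        congr! with j
        rw [← ENNReal.ofReal_tsum_of_nonneg (hpos.apply_stdb_nonneg · j) (hcol j).summable,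
          (hcol j).tsum_eq, ENNReal.ofReal_one, one_mul]

/-- If `φ : (a,b) → [0,∞)` is convex, `f, g ∈ ℓᵖ(I)` have ranges in `(a,b)` and `f ≺ g`,
then `∑_i φ (f i) ≤ ∑_i φ (g i)` (as sums in `[0,∞]`). -/
theorem stmt9 {I : Type*} [Nonempty I] (p : ℝ≥0∞) [Fact (1 ≤ p)] (hp : p ≠ ∞)
    (a b : EReal) (hab : a < b) (φ : ℝ → ℝ)
    (hconv : ConvexOn ℝ {x : ℝ | a < (x : EReal) ∧ (x : EReal) < b} φ)
    (hφ : ∀ x : ℝ, a < (x : EReal) → (x : EReal) < b → 0 ≤ φ x)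
    (f g : lp (fun _ : I => ℝ) p)
    (hf : ∀ i, a < (f i : EReal) ∧ (f i : EReal) < b)
    (hg : ∀ i, a < (g i : EReal) ∧ (g i : EReal) < b)
    (hfg : Majorized f g) :
    ∑' i : I, ENNReal.ofReal (φ (f i)) ≤ ∑' i : I, ENNReal.ofReal (φ (g i)) :=
  stmt9_general p hp a b φ hconv f g hf hg hfg
end

section
/- Let D be a doubly stochastic operator on ℓᵖ(I) and let Σ be a family of injections σ : I → I whose ranges are pairwise disjoint. Then there exists a doubly stochastic operator D̃ on ℓᵖ(I) such that P_σ ∘ D = D̃ ∘ P_σ for every σ ∈ Σ, where P_σ is the isometry P_σ(∑_j f_j e_j) = ∑_j f_j e_{σ(j)}. -/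
open scoped ENNReal

/-! The maps `(σ, j) ↦ σ j`, `σ ∈ S`, together form one injection `e : S × I → I`, since the
ranges are disjoint. Let `D̃` act as `D` on every block `{σ j | j ∈ I}` and as the identity on
the coordinates outside `range e`. By Fubini over `S × I`, `‖D̃ f‖` is controlled by `‖D‖ ‖f‖`;
positivity and the row and column sums are checked block by block, the blocks being copies of `D`
and of the identity; and `P σ` is the isometry of `ℓᵖ(I)` onto the block of `σ`, on which `D̃` is
`D` transported by `P σ`. -/

open Function

local notation "ℓ(" α ", " p ")" => lp (fun _ : α => ℝ) p

lemma Function.Injective.comp_prodMk {α β γ : Type*} {e : α × β → γ} (he : Injective e) (a : α) :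
    Injective fun b => e (a, b) :=
  he.comp (Prod.mk_right_injective a)

lemma Function.Injective.disjoint_range_comp_prodMk {α β γ : Type*} {e : α × β → γ}
    (he : Injective e) {a a' : α} (h : a ≠ a') :
    Disjoint (Set.range fun b => e (a, b)) (Set.range fun b => e (a', b)) :=
  Set.disjoint_left.2 fun _ ⟨_, hb⟩ ⟨_, hb'⟩ => h (congrArg Prod.fst (he (hb.trans hb'.symm)))

lemma injective_eval_of_disjoint_range {β γ : Type*} {S : Set (β → γ)}
    (hinj : ∀ σ ∈ S, Injective σ)
    (hdisj : ∀ σ₁ ∈ S, ∀ σ₂ ∈ S, σ₁ ≠ σ₂ → Disjoint (Set.range σ₁) (Set.range σ₂)) :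
    Injective fun x : S × β => x.1.1 x.2 := by
  rintro ⟨⟨σ, hσ⟩, b⟩ ⟨⟨τ, hτ⟩, b'⟩ h
  obtain rfl : σ = τ := by
    by_contra hne
    exact Set.disjoint_left.1 (hdisj σ hσ τ hτ hne) ⟨b, rfl⟩ ⟨b', h.symm⟩
  obtain rfl := hinj σ hσ h
  rfl

namespace lp

variable {α β γ : Type*} {p : ℝ≥0∞} [Fact (1 ≤ p)]

noncomputable def pullback (hp : p ≠ ∞) {e : α → β} (he : Injective e) :
    ℓ(β, p) →L[ℝ] ℓ(α, p) :=
  LinearMap.mkContinuous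
    { toFun f := ⟨f ∘ e, memℓp_gen (((lp.memℓp f).summable
        ((ENNReal.toReal_pos_iff_ne_top p).2 hp)).comp_injective he)⟩
      map_add' _ _ := rfl
      map_smul' _ _ := rfl }
    1 fun f => by
      have hq := (ENNReal.toReal_pos_iff_ne_top p).2 hp
      rw [one_mul]
      refine lp.norm_le_of_tsum_le hq (norm_nonneg f) ?_
      rw [lp.norm_rpow_eq_tsum hq]
      exact tsum_comp_le_tsum_of_inj ((lp.memℓp f).summable hq) (fun _ => by positivity) he

@[simp] lemma pullback_apply (hp : p ≠ ∞) {e : α → β} (he : Injective e) (f : ℓ(β, p)) (a : α) :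
    pullback hp he f a = f (e a) := rfl

lemma hasSum_norm_rpow_extend_zero (hp : p ≠ ∞) {e : α → β} (he : Injective e) (g : ℓ(α, p)) :
    HasSum (fun b => ‖extend e g 0 b‖ ^ p.toReal) (‖g‖ ^ p.toReal) := by
  have hq := (ENNReal.toReal_pos_iff_ne_top p).2 hp
  have : (fun b => ‖extend e g 0 b‖ ^ p.toReal) = extend e (fun a => ‖g a‖ ^ p.toReal) 0 := by
    ext b
    rw [apply_extend (fun x : ℝ => ‖x‖ ^ p.toReal)]
    congr 1
    ext
    simp [Real.zero_rpow hq.ne']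
  rw [this]
  exact (hasSum_extend_zero he).2 (lp.hasSum_norm hq g)

noncomputable def extendByZero (hp : p ≠ ∞) {e : α → β} (he : Injective e) :
    ℓ(α, p) →L[ℝ] ℓ(β, p) :=
  LinearMap.mkContinuous
    { toFun g := ⟨extend e g 0, memℓp_gen (hasSum_norm_rpow_extend_zero hp he g).summable⟩
      map_add' g h := by
        ext b
        simp only [lp.coeFn_add, Pi.add_apply]
        rw [← Pi.add_apply (extend e g 0), ← extend_add, add_zero]
      map_smul' c g := by
        ext b
        simpa using congrFun (extend_smul c e g 0) b }
    1 fun g => by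
      have hq := (ENNReal.toReal_pos_iff_ne_top p).2 hp
      rw [one_mul]
      exact lp.norm_le_of_tsum_le hq (norm_nonneg g)
        (hasSum_norm_rpow_extend_zero hp he g).tsum_eq.le

@[simp] lemma extendByZero_apply_self (hp : p ≠ ∞) {e : α → β} (he : Injective e)
    (g : ℓ(α, p)) (a : α) : extendByZero hp he g (e a) = g a :=
  he.extend_apply _ _ a

lemma extendByZero_apply_of_notMem_range (hp : p ≠ ∞) {e : α → β} (he : Injective e)
    (g : ℓ(α, p)) {b : β} (hb : b ∉ Set.range e) : extendByZero hp he g b = 0 :=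
  extend_apply' _ _ b hb

@[simp] lemma pullback_extendByZero (hp : p ≠ ∞) {e : α → β} (he : Injective e) (g : ℓ(α, p)) :
    pullback hp he (extendByZero hp he g) = g := by
  ext a
  simp

lemma pullback_extendByZero_of_disjoint (hp : p ≠ ∞) {e e' : α → β} (he : Injective e)
    (he' : Injective e') (hee' : Disjoint (Set.range e) (Set.range e')) (g : ℓ(α, p)) :
    pullback hp he' (extendByZero hp he g) = 0 := by
  ext a
  exact extendByZero_apply_of_notMem_range hp he g (Set.disjoint_right.1 hee' ⟨a, rfl⟩)

lemma hasSum_norm_rpow_pullback_prodMk (hp : p ≠ ∞) (h : ℓ(α × β, p)) :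
    HasSum (fun a => ‖pullback hp (Prod.mk_right_injective a) h‖ ^ p.toReal)
      (‖h‖ ^ p.toReal) :=
  have hq := (ENNReal.toReal_pos_iff_ne_top p).2 hp
  (lp.hasSum_norm hq h).prod_fiberwise fun a => by
    simpa using lp.hasSum_norm hq (pullback hp (Prod.mk_right_injective a) h)

lemma hasSum_norm_rpow_uncurry (hp : p ≠ ∞) (F : α → ℓ(β, p))
    (hF : Summable fun a => ‖F a‖ ^ p.toReal) :
    HasSum (fun x : α × β => ‖F x.1 x.2‖ ^ p.toReal) (∑' a, ‖F a‖ ^ p.toReal) := by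
  have hq := (ENNReal.toReal_pos_iff_ne_top p).2 hp
  have hsum : Summable fun x : α × β => ‖F x.1 x.2‖ ^ p.toReal :=
    (summable_prod_of_nonneg fun _ => by positivity).2
      ⟨fun a => (lp.hasSum_norm hq (F a)).summable,
        hF.congr fun a => (lp.hasSum_norm hq (F a)).tsum_eq.symm⟩
  convert hsum.hasSum using 1
  exact hF.hasSum.unique (hsum.hasSum.prod_fiberwise fun a => lp.hasSum_norm hq (F a))

lemma norm_rpow_apply_le (hp : p ≠ ∞) (D : ℓ(β, p) →L[ℝ] ℓ(β, p)) (f : ℓ(β, p)) :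
    ‖D f‖ ^ p.toReal ≤ ‖D‖ ^ p.toReal * ‖f‖ ^ p.toReal := by
  rw [← Real.mul_rpow (norm_nonneg D) (norm_nonneg f)]
  exact Real.rpow_le_rpow (norm_nonneg _) (D.le_opNorm f)
    ((ENNReal.toReal_pos_iff_ne_top p).2 hp).le

lemma summable_norm_rpow_apply_pullback_prodMk (hp : p ≠ ∞) (D : ℓ(β, p) →L[ℝ] ℓ(β, p))
    (h : ℓ(α × β, p)) :
    Summable fun a => ‖D (pullback hp (Prod.mk_right_injective a) h)‖ ^ p.toReal :=
  .of_nonneg_of_le (fun _ => by positivity) (fun _ => norm_rpow_apply_le hp D _)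
    ((hasSum_norm_rpow_pullback_prodMk hp h).summable.mul_left _)

noncomputable def fiberwise (hp : p ≠ ∞) (D : ℓ(β, p) →L[ℝ] ℓ(β, p)) :
    ℓ(α × β, p) →L[ℝ] ℓ(α × β, p) :=
  LinearMap.mkContinuous
    { toFun h := ⟨fun x => D (pullback hp (Prod.mk_right_injective x.1) h) x.2,
        memℓp_gen (hasSum_norm_rpow_uncurry hp _
          (summable_norm_rpow_apply_pullback_prodMk hp D h)).summable⟩
      map_add' h k := by
        ext x
        simp
        rfl
      map_smul' c h := by
        ext x
        simp }
    ‖D‖ fun h => by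
      have hq := (ENNReal.toReal_pos_iff_ne_top p).2 hp
      refine lp.norm_le_of_tsum_le hq (by positivity) ?_
      change ∑' x : α × β, ‖D (pullback hp (Prod.mk_right_injective x.1) h) x.2‖ ^ p.toReal ≤ _
      rw [(hasSum_norm_rpow_uncurry hp _ (summable_norm_rpow_apply_pullback_prodMk hp D h)).tsum_eq,
        Real.mul_rpow (norm_nonneg D) (norm_nonneg h),
        ← (hasSum_norm_rpow_pullback_prodMk hp h).tsum_eq, ← tsum_mul_left]
      exact (summable_norm_rpow_apply_pullback_prodMk hp D h).tsum_le_tsum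
        (fun _ => norm_rpow_apply_le hp D _)
        ((hasSum_norm_rpow_pullback_prodMk hp h).summable.mul_left _)

/-- `extendByZero he ∘L pullback he` is the coordinate projection onto `range e`, so this is `D` on
each block `e (a, ·)` and the identity off `range e`. -/
noncomputable def blockDiagonal (hp : p ≠ ∞) {e : α × β → γ} (he : Injective e)
    (D : ℓ(β, p) →L[ℝ] ℓ(β, p)) : ℓ(γ, p) →L[ℝ] ℓ(γ, p) :=
  extendByZero hp he ∘L fiberwise hp D ∘L pullback hp he +
    (1 - extendByZero hp he ∘L pullback hp he)

lemma blockDiagonal_apply_image (hp : p ≠ ∞) {e : α × β → γ} (he : Injective e)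
    (D : ℓ(β, p) →L[ℝ] ℓ(β, p)) (f : ℓ(γ, p)) (a : α) (b : β) :
    blockDiagonal hp he D f (e (a, b)) =
      D (pullback hp (he.comp_prodMk a) f) b := by
  simp [blockDiagonal]
  rfl

lemma blockDiagonal_apply_of_notMem_range (hp : p ≠ ∞) {e : α × β → γ} (he : Injective e)
    (D : ℓ(β, p) →L[ℝ] ℓ(β, p)) (f : ℓ(γ, p)) {c : γ} (hc : c ∉ Set.range e) :
    blockDiagonal hp he D f c = f c := by
  simp [blockDiagonal, extendByZero_apply_of_notMem_range hp he _ hc]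

end lp

section stdb

variable {α β : Type*} {p : ℝ≥0∞}

lemma lp.single_one_eq_stdb [DecidableEq α] (a : α) : lp.single p a (1 : ℝ) = stdb p a := by
  unfold stdb
  congr
  exact Subsingleton.elim _ _

@[simp] lemma stdb_apply_self (a : α) : stdb p a a = 1 := by
  classical
  rw [← lp.single_one_eq_stdb, lp.single_apply_self]

lemma stdb_apply_of_ne {a a' : α} (h : a' ≠ a) : stdb p a a' = 0 := by
  classical
  rw [← lp.single_one_eq_stdb, lp.single_apply_ne p a _ h]

lemma hasSum_stdb_apply (a : α) : HasSum (fun a' => stdb p a a') 1 := by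
  simpa using hasSum_single (f := fun a' => stdb p a a') a fun a' h => stdb_apply_of_ne h

lemma hasSum_stdb_apply_left (a' : α) : HasSum (fun a => stdb p a a') 1 := by
  simpa using hasSum_single (f := fun a => stdb p a a') a' fun a h => stdb_apply_of_ne h.symm

variable [Fact (1 ≤ p)]

namespace lp

lemma pullback_stdb_self (hp : p ≠ ∞) {g : α → β} (hg : Injective g) (a : α) :
    pullback hp hg (stdb p (g a)) = stdb p a := by
  ext a'
  rcases eq_or_ne a' a with rfl | h
  · simp
  · rw [pullback_apply, stdb_apply_of_ne (hg.ne h), stdb_apply_of_ne h]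

lemma pullback_stdb_of_notMem_range (hp : p ≠ ∞) {g : α → β} (hg : Injective g) {b : β}
    (hb : b ∉ Set.range g) : pullback hp hg (stdb p b) = 0 := by
  ext a
  exact stdb_apply_of_ne (p := p) fun h => hb ⟨a, h⟩

lemma extendByZero_stdb (hp : p ≠ ∞) {g : α → β} (hg : Injective g) (a : α) :
    extendByZero hp hg (stdb p a) = stdb p (g a) := by
  ext b
  by_cases hb : b ∈ Set.range g
  · obtain ⟨a', rfl⟩ := hb
    rcases eq_or_ne a' a with rfl | h
    · simp
    · rw [extendByZero_apply_self, stdb_apply_of_ne h, stdb_apply_of_ne (hg.ne h)]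
  · rw [extendByZero_apply_of_notMem_range hp hg _ hb, stdb_apply_of_ne fun h => hb ⟨a, h.symm⟩]

lemma eq_extendByZero_of_apply_stdb (hp : p ≠ ∞) {g : α → β} (hg : Injective g)
    (T : ℓ(α, p) →L[ℝ] ℓ(β, p)) (hT : ∀ a, T (stdb p a) = stdb p (g a)) :
    T = extendByZero hp hg := by
  classical
  refine lp.ext_continuousLinearMap hp fun a => ContinuousLinearMap.ext_ring ?_
  simp [lp.single_one_eq_stdb, hT, extendByZero_stdb]

end lp

end stdb

namespace lp

variable {α β γ : Type*} {p : ℝ≥0∞} [Fact (1 ≤ p)] (hp : p ≠ ∞) {e : α × β → γ}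
  (he : Injective e) {D : ℓ(β, p) →L[ℝ] ℓ(β, p)}

lemma isPositiveOp_blockDiagonal (hD : IsPositiveOp D) : IsPositiveOp (blockDiagonal hp he D) := by
  intro f hf c
  by_cases hc : c ∈ Set.range e
  · obtain ⟨⟨a, b⟩, rfl⟩ := hc
    rw [blockDiagonal_apply_image]
    exact hD _ (fun _ => hf _) b
  · rw [blockDiagonal_apply_of_notMem_range hp he D f hc]
    exact hf c

lemma hasSum_blockDiagonal_stdb_apply_left (hrow : ∀ b, HasSum (fun b' => D (stdb p b') b) 1)
    (c : γ) : HasSum (fun c' => blockDiagonal hp he D (stdb p c') c) 1 := by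
  by_cases hc : c ∈ Set.range e
  · obtain ⟨⟨a, b⟩, rfl⟩ := hc
    have hea := he.comp_prodMk a
    refine (hea.hasSum_iff fun c' hc' => ?_).1 ?_
    · rw [blockDiagonal_apply_image, pullback_stdb_of_notMem_range hp hea hc', map_zero,
        lp.coeFn_zero, Pi.zero_apply]
    · simpa [comp_def, blockDiagonal_apply_image, pullback_stdb_self hp hea] using hrow b
  · simpa only [blockDiagonal_apply_of_notMem_range hp he D _ hc] using hasSum_stdb_apply_left c

lemma blockDiagonal_stdb_of_notMem_range {c : γ} (hc : c ∉ Set.range e) :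
    blockDiagonal hp he D (stdb p c) = stdb p c := by
  ext c'
  by_cases hc' : c' ∈ Set.range e
  · obtain ⟨⟨a, b⟩, rfl⟩ := hc'
    rw [blockDiagonal_apply_image, pullback_stdb_of_notMem_range hp (he.comp_prodMk a)
      (fun ⟨b', h⟩ => hc ⟨_, h⟩), map_zero, lp.coeFn_zero, Pi.zero_apply]
    exact (stdb_apply_of_ne fun h => hc ⟨_, h⟩).symm
  · exact blockDiagonal_apply_of_notMem_range hp he D _ hc'

lemma hasSum_blockDiagonal_stdb_apply (hcol : ∀ b, HasSum (fun b' => D (stdb p b) b') 1)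
    (c : γ) : HasSum (fun c' => blockDiagonal hp he D (stdb p c) c') 1 := by
  by_cases hc : c ∈ Set.range e
  · obtain ⟨⟨a, b⟩, rfl⟩ := hc
    have hea := he.comp_prodMk a
    refine (hea.hasSum_iff fun c' hc' => ?_).1 ?_
    · by_cases hc'e : c' ∈ Set.range e
      · obtain ⟨⟨a', b'⟩, rfl⟩ := hc'e
        have ha : a ≠ a' := by
          rintro rfl
          exact hc' ⟨b', rfl⟩
        rw [blockDiagonal_apply_image, pullback_stdb_of_notMem_range hp (he.comp_prodMk a')
          (Set.disjoint_left.1 (he.disjoint_range_comp_prodMk ha) ⟨b, rfl⟩), map_zero,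
          lp.coeFn_zero, Pi.zero_apply]
      · rw [blockDiagonal_apply_of_notMem_range hp he D _ hc'e,
          stdb_apply_of_ne fun h => hc'e ⟨_, h.symm⟩]
    · simpa [comp_def, blockDiagonal_apply_image, pullback_stdb_self hp hea] using hcol b
  · rw [blockDiagonal_stdb_of_notMem_range hp he hc]
    exact hasSum_stdb_apply c

lemma isDoublyStochastic_blockDiagonal (hD : IsDoublyStochastic D) :
    IsDoublyStochastic (blockDiagonal hp he D) :=
  ⟨⟨isPositiveOp_blockDiagonal hp he hD.1.1, hasSum_blockDiagonal_stdb_apply_left hp he hD.1.2⟩,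
    ⟨isPositiveOp_blockDiagonal hp he hD.1.1, hasSum_blockDiagonal_stdb_apply hp he hD.2.2⟩⟩

lemma blockDiagonal_comp_extendByZero (a : α) :
    blockDiagonal hp he D ∘L extendByZero hp (he.comp_prodMk a) =
      extendByZero hp (he.comp_prodMk a) ∘L D := by
  ext f c
  by_cases hc : c ∈ Set.range e
  · obtain ⟨⟨a', b⟩, rfl⟩ := hc
    rw [ContinuousLinearMap.comp_apply, ContinuousLinearMap.comp_apply, blockDiagonal_apply_image]
    rcases eq_or_ne a a' with rfl | ha
    · rw [pullback_extendByZero]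
      exact (extendByZero_apply_self hp (he.comp_prodMk a) (D f) b).symm
    · rw [pullback_extendByZero_of_disjoint hp _ _ (he.disjoint_range_comp_prodMk ha), map_zero,
        extendByZero_apply_of_notMem_range hp _ _
          (Set.disjoint_right.1 (he.disjoint_range_comp_prodMk ha) ⟨b, rfl⟩)]
      rfl
  · have hca : c ∉ Set.range fun b => e (a, b) := fun ⟨b, h⟩ => hc ⟨_, h⟩
    rw [ContinuousLinearMap.comp_apply, ContinuousLinearMap.comp_apply,
      blockDiagonal_apply_of_notMem_range hp he D _ hc,
      extendByZero_apply_of_notMem_range hp _ _ hca, extendByZero_apply_of_notMem_range hp _ _ hca]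

end lp

theorem stmt13_general {I : Type*} (p : ℝ≥0∞) [Fact (1 ≤ p)] (hp : p ≠ ∞)
    (D : lp (fun _ : I => ℝ) p →L[ℝ] lp (fun _ : I => ℝ) p) (hD : IsDoublyStochastic D)
    (S : Set (I → I)) (hinj : ∀ σ ∈ S, Function.Injective σ)
    (hdisj : ∀ σ₁ ∈ S, ∀ σ₂ ∈ S, σ₁ ≠ σ₂ → Disjoint (Set.range σ₁) (Set.range σ₂))
    (P : (I → I) → lp (fun _ : I => ℝ) p →L[ℝ] lp (fun _ : I => ℝ) p)
    (hP : ∀ σ ∈ S, ∀ j : I, P σ (stdb p j) = stdb p (σ j)) :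
    ∃ D' : lp (fun _ : I => ℝ) p →L[ℝ] lp (fun _ : I => ℝ) p,
      IsDoublyStochastic D' ∧ ∀ σ ∈ S, (P σ).comp D = D'.comp (P σ) := by
  have he := injective_eval_of_disjoint_range hinj hdisj
  refine ⟨lp.blockDiagonal hp he D, lp.isDoublyStochastic_blockDiagonal hp he hD, fun σ hσ => ?_⟩
  rw [lp.eq_extendByZero_of_apply_stdb hp (he.comp_prodMk ⟨σ, hσ⟩) (P σ) (hP σ hσ)]
  exact (lp.blockDiagonal_comp_extendByZero hp he _).symm

/-- Given a doubly stochastic `D` on `ℓᵖ(I)` and a family `S` of injections `I → I` with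
pairwise disjoint ranges (with `P σ` the operator `e_j ↦ e_{σ j}`), there is a doubly
stochastic `D̃` with `P_σ ∘ D = D̃ ∘ P_σ` for all `σ ∈ S`. -/
theorem stmt13 {I : Type*} [Nonempty I] (p : ℝ≥0∞) [Fact (1 ≤ p)] (hp : p ≠ ∞)
    (D : lp (fun _ : I => ℝ) p →L[ℝ] lp (fun _ : I => ℝ) p) (hD : IsDoublyStochastic D)
    (S : Set (I → I)) (hinj : ∀ σ ∈ S, Function.Injective σ)
    (hdisj : ∀ σ₁ ∈ S, ∀ σ₂ ∈ S, σ₁ ≠ σ₂ → Disjoint (Set.range σ₁) (Set.range σ₂))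
    (P : (I → I) → lp (fun _ : I => ℝ) p →L[ℝ] lp (fun _ : I => ℝ) p)
    (hP : ∀ σ ∈ S, ∀ j : I, P σ (stdb p j) = stdb p (σ j)) :
    ∃ D' : lp (fun _ : I => ℝ) p →L[ℝ] lp (fun _ : I => ℝ) p,
      IsDoublyStochastic D' ∧ ∀ σ ∈ S, (P σ).comp D = D'.comp (P σ) :=
  stmt13_general p hp D hD S hinj hdisj P hP
end

section
/- Let I be infinite, 1 ≤ p < ∞, I₀ ⊆ I countable, Σ = {σ_i : I → I ; i ∈ I₀} a family of injections with pairwise disjoint ranges, and (α_i)_{i∈I₀} ∈ ℓᵖ(I₀). Then T := ∑_{i∈I₀} α_i P_{σ_i} is a well-defined bounded linear operator on ℓᵖ(I) that preserves majorization. -/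
open scoped ENNReal

/-!
Since the ranges of the `σ i` are pairwise disjoint, `(i, n) ↦ σ i n` is injective, and `T` is
extension by zero along it composed with the tensor map `h ↦ ((i, n) ↦ α i * h n)`. The latter
is bounded and linear in `α`, so expanding `α = ∑ α i eᵢ` in `ℓᵖ(I₀)` gives the convergence of
`∑ α i P_{σ i}` in operator norm. If `f = D g` with `D` doubly stochastic, then `T f = D' (T g)`,
where `D'` acts as `D` on each block `ℓᵖ(range (σ i))`, transported by `σ i`, and as the
identity off the blocks; `D'` is again doubly stochastic.
-/

open Function

section Reindex

variable {I J : Type*} {E : Type*} [NormedAddCommGroup E] {p : ℝ≥0∞}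

lemma hasSum_norm_rpow_extend_zero (hq : 0 < p.toReal) {τ : J → I} (hτ : Injective τ)
    (v : lp (fun _ : J => E) p) :
    HasSum (fun k => ‖extend τ (v : J → E) 0 k‖ ^ p.toReal) (‖v‖ ^ p.toReal) := by
  have h : (fun k => ‖extend τ (v : J → E) 0 k‖ ^ p.toReal)
      = extend τ (fun n => ‖v n‖ ^ p.toReal) 0 := by
    ext k
    rw [apply_extend (fun x : E => ‖x‖ ^ p.toReal)]
    congr 1
    ext k
    simp [Real.zero_rpow hq.ne']
  rw [h, hasSum_extend_zero hτ]
  exact lp.hasSum_norm hq v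

variable [NormedSpace ℝ E] [Fact (1 ≤ p)]

lemma toReal_pos_of_ne_top (hp : p ≠ ∞) : 0 < p.toReal :=
  ENNReal.toReal_pos (zero_lt_one.trans_le (Fact.out : (1 : ℝ≥0∞) ≤ p)).ne' hp

noncomputable def lpComp (hp : p ≠ ∞) {τ : J → I} (hτ : Injective τ) :
    lp (fun _ : I => E) p →L[ℝ] lp (fun _ : J => E) p :=
  have hq := toReal_pos_of_ne_top hp
  LinearMap.mkContinuous
    { toFun := fun u => ⟨u ∘ τ, memℓp_gen (((lp.memℓp u).summable hq).comp_injective hτ)⟩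
      map_add' := fun _ _ => rfl
      map_smul' := fun _ _ => rfl }
    1 fun u => by
      refine (lp.norm_le_of_tsum_le hq (norm_nonneg u) ?_).trans_eq (one_mul _).symm
      rw [lp.norm_rpow_eq_tsum hq]
      exact tsum_comp_le_tsum_of_inj ((lp.memℓp u).summable hq) (fun _ => by positivity) hτ

@[simp]
lemma lpComp_apply (hp : p ≠ ∞) {τ : J → I} (hτ : Injective τ) (u : lp (fun _ : I => E) p)
    (n : J) : lpComp hp hτ u n = u (τ n) := rfl

noncomputable def lpExtend (hp : p ≠ ∞) {τ : J → I} (hτ : Injective τ) :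
    lp (fun _ : J => E) p →L[ℝ] lp (fun _ : I => E) p :=
  have hq := toReal_pos_of_ne_top hp
  LinearMap.mkContinuous
    { toFun := fun v => ⟨extend τ v 0,
        memℓp_gen (hasSum_norm_rpow_extend_zero hq hτ v).summable⟩
      map_add' := fun u v => lp.ext <| by
        change extend τ ⇑(u + v) 0 = extend τ u 0 + extend τ v 0
        rw [lp.coeFn_add, ← extend_add, add_zero]
      map_smul' := fun c v => lp.ext (by simpa using extend_smul c τ v 0) }
    1 fun v => by
      refine (lp.norm_le_of_tsum_le hq (norm_nonneg v) ?_).trans_eq (one_mul _).symm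
      exact (hasSum_norm_rpow_extend_zero hq hτ v).tsum_eq.le

lemma lpExtend_apply_self (hp : p ≠ ∞) {τ : J → I} (hτ : Injective τ)
    (v : lp (fun _ : J => E) p) (n : J) : lpExtend hp hτ v (τ n) = v n :=
  hτ.extend_apply _ _ n

lemma lpExtend_apply_of_notMem_range (hp : p ≠ ∞) {τ : J → I} (hτ : Injective τ)
    (v : lp (fun _ : J => E) p) {k : I} (hk : k ∉ Set.range τ) : lpExtend hp hτ v k = 0 :=
  extend_apply' _ _ k hk

end Reindex

section StdBasis

variable {I J : Type*} {p : ℝ≥0∞}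

lemma stdb_apply [DecidableEq I] (j k : I) : stdb p j k = if k = j then 1 else 0 := by
  simp only [stdb, lp.single_apply, Pi.single_apply]
  congr

variable [Fact (1 ≤ p)]

lemma lpComp_stdb_self (hp : p ≠ ∞) {τ : J → I} (hτ : Injective τ) (m : J) :
    lpComp hp hτ (stdb p (τ m)) = stdb p m := by
  classical
  ext n
  simp only [lpComp_apply, stdb_apply]
  exact if_congr hτ.eq_iff rfl rfl

lemma lpComp_stdb_of_notMem_range (hp : p ≠ ∞) {τ : J → I} (hτ : Injective τ) {j : I}
    (hj : j ∉ Set.range τ) : lpComp hp hτ (stdb p j) = 0 := by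
  classical
  ext n
  simp only [lpComp_apply, stdb_apply, lp.coeFn_zero, Pi.zero_apply, ite_eq_right_iff]
  exact fun h => (hj ⟨n, h⟩).elim

lemma lpExtend_stdb (hp : p ≠ ∞) {τ : J → I} (hτ : Injective τ) (j : J) :
    lpExtend hp hτ (stdb p j) = stdb p (τ j) := by
  classical
  ext k
  by_cases hk : k ∈ Set.range τ
  · obtain ⟨n, rfl⟩ := hk
    simp only [lpExtend_apply_self, stdb_apply]
    exact if_congr hτ.eq_iff.symm rfl rfl
  · rw [lpExtend_apply_of_notMem_range hp hτ _ hk, stdb_apply, if_neg]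
    rintro rfl
    exact hk ⟨j, rfl⟩

lemma eq_lpExtend_of_apply_stdb (hp : p ≠ ∞) {τ : J → I} (hτ : Injective τ)
    {A : lp (fun _ : J => ℝ) p →L[ℝ] lp (fun _ : I => ℝ) p}
    (hA : ∀ j, A (stdb p j) = stdb p (τ j)) : A = lpExtend hp hτ := by
  classical
  refine lp.ext_continuousLinearMap hp fun j => ContinuousLinearMap.ext_ring ?_
  have h1 : lp.single p j (1 : ℝ) = stdb p j := by
    ext k; rw [stdb_apply, lp.single_apply, Pi.single_apply]
  simp [h1, hA, lpExtend_stdb]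

end StdBasis

section Tensor

variable {X J : Type*} {p : ℝ≥0∞}

lemma hasSum_norm_rpow_mul (hq : 0 < p.toReal) (a : lp (fun _ : X => ℝ) p)
    (h : lp (fun _ : J => ℝ) p) :
    HasSum (fun x : X × J => ‖a x.1 * h x.2‖ ^ p.toReal) (‖a‖ ^ p.toReal * ‖h‖ ^ p.toReal) := by
  have ha := lp.hasSum_norm hq a
  have hh := lp.hasSum_norm hq h
  have hs := ha.summable.mul_of_nonneg hh.summable (fun _ => by positivity) fun _ => by positivity
  have e : (fun x : X × J => ‖a x.1 * h x.2‖ ^ p.toReal)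
      = fun x => ‖a x.1‖ ^ p.toReal * ‖h x.2‖ ^ p.toReal := by
    ext x; rw [norm_mul, Real.mul_rpow (norm_nonneg _) (norm_nonneg _)]
  rw [e]
  exact ha.mul hh hs

variable [Fact (1 ≤ p)]

noncomputable def lpTensor (hp : p ≠ ∞) :
    lp (fun _ : X => ℝ) p →L[ℝ] lp (fun _ : J => ℝ) p →L[ℝ] lp (fun _ : X × J => ℝ) p :=
  have hq := toReal_pos_of_ne_top hp
  LinearMap.mkContinuous₂
    (LinearMap.mk₂ ℝ
      (fun a h => ⟨fun x => a x.1 * h x.2, memℓp_gen (hasSum_norm_rpow_mul hq a h).summable⟩)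
      (fun a b h => lp.ext <| funext fun x => add_mul (a x.1) (b x.1) (h x.2))
      (fun c a h => lp.ext <| funext fun x => mul_assoc c (a x.1) (h x.2))
      (fun a h k => lp.ext <| funext fun x => mul_add (a x.1) (h x.2) (k x.2))
      (fun c a h => lp.ext <| funext fun x => mul_left_comm (a x.1) c (h x.2)))
    1 fun a h => by
      rw [one_mul]
      refine lp.norm_le_of_tsum_le hq (by positivity) ?_
      rw [Real.mul_rpow (norm_nonneg _) (norm_nonneg _)]
      exact (hasSum_norm_rpow_mul hq a h).tsum_eq.le

@[simp]
lemma lpTensor_apply (hp : p ≠ ∞) (a : lp (fun _ : X => ℝ) p) (h : lp (fun _ : J => ℝ) p)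
    (x : X × J) : lpTensor hp a h x = a x.1 * h x.2 := rfl

end Tensor

section Blocks

variable {X J I : Type*} {τ : X → J → I}

lemma Function.Injective.of_uncurry (hτ : Injective (uncurry τ)) (x : X) : Injective (τ x) :=
  hτ.comp (Prod.mk_right_injective x)

lemma injective_uncurry_of_pairwise_disjoint (hinj : ∀ x, Injective (τ x))
    (hdisj : Pairwise (Disjoint on fun x => Set.range (τ x))) : Injective (uncurry τ) := by
  rintro ⟨x₁, n₁⟩ ⟨x₂, n₂⟩ h
  obtain rfl : x₁ = x₂ := by
    by_contra hne
    exact Set.disjoint_left.mp (hdisj hne) ⟨n₁, rfl⟩ ⟨n₂, h.symm⟩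
  exact congrArg _ (hinj x₁ h)

lemma notMem_range_of_injective_uncurry (hτ : Injective (uncurry τ)) {x x' : X} (hx : x' ≠ x)
    (n : J) : τ x' n ∉ Set.range (τ x) := by
  rintro ⟨m, hm⟩
  exact hx (congrArg Prod.fst (hτ (a₁ := (x', n)) (a₂ := (x, m)) hm.symm))

lemma notMem_range_of_notMem_range_uncurry {k : I} (hk : k ∉ Set.range (uncurry τ)) (x : X) :
    k ∉ Set.range (τ x) :=
  fun ⟨n, hn⟩ => hk ⟨(x, n), hn⟩

variable {p : ℝ≥0∞} [Fact (1 ≤ p)] (hp : p ≠ ∞) (hτ : Injective (uncurry τ))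
include hp hτ

lemma lpExtend_lpTensor_single [DecidableEq X] (x : X) (c : ℝ) (h : lp (fun _ : J => ℝ) p) :
    lpExtend hp hτ (lpTensor hp (lp.single p x c) h) = c • lpExtend hp (hτ.of_uncurry x) h := by
  ext k
  by_cases hk : k ∈ Set.range (uncurry τ)
  · obtain ⟨⟨x', n⟩, rfl⟩ := hk
    rw [lpExtend_apply_self, lpTensor_apply, lp.coeFn_smul, Pi.smul_apply, smul_eq_mul,
      uncurry_apply_pair]
    dsimp only
    rcases eq_or_ne x' x with rfl | hx
    · rw [lp.single_apply_self, lpExtend_apply_self]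
    · rw [lp.single_apply_ne _ _ _ hx, zero_mul,
        lpExtend_apply_of_notMem_range hp _ _ (notMem_range_of_injective_uncurry hτ hx n),
        mul_zero]
  · rw [lpExtend_apply_of_notMem_range hp hτ _ hk, lp.coeFn_smul, Pi.smul_apply,
      lpExtend_apply_of_notMem_range hp _ _ (notMem_range_of_notMem_range_uncurry hk x),
      smul_zero]

lemma hasSum_smul_lpExtend (a : lp (fun _ : X => ℝ) p) :
    HasSum (fun x => a x • lpExtend hp (hτ.of_uncurry x))
      (lpExtend hp hτ ∘L lpTensor hp a) := by
  classical
  have := (lp.hasSum_single hp a).mapL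
    (ContinuousLinearMap.compL ℝ _ _ _ (lpExtend hp hτ) ∘L lpTensor hp)
  simp only [ContinuousLinearMap.comp_apply, ContinuousLinearMap.compL_apply] at this
  convert this using 1
  ext1 x
  ext1 h
  exact (lpExtend_lpTensor_single hp hτ x (a x) h).symm

lemma lpComp_lpExtend_lpTensor (a : lp (fun _ : X => ℝ) p) (h : lp (fun _ : J => ℝ) p)
    (x : X) : lpComp hp (hτ.of_uncurry x) (lpExtend hp hτ (lpTensor hp a h)) = a x • h := by
  ext n
  exact lpExtend_apply_self hp hτ _ (x, n)

end Blocks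
section Fiberwise

variable {X J : Type*} {E : Type*} [NormedAddCommGroup E] [NormedSpace ℝ E]
  {p : ℝ≥0∞} [Fact (1 ≤ p)] (hp : p ≠ ∞)

noncomputable abbrev lpFiber (x : X) : lp (fun _ : X × J => E) p →L[ℝ] lp (fun _ : J => E) p :=
  lpComp hp (Prod.mk_right_injective x)

lemma hasSum_norm_rpow_lpFiber (v : lp (fun _ : X × J => E) p) :
    HasSum (fun x => ‖lpFiber hp x v‖ ^ p.toReal) (‖v‖ ^ p.toReal) :=
  have hq := toReal_pos_of_ne_top hp
  (lp.hasSum_norm hq v).prod_fiberwise fun x => lp.hasSum_norm hq (lpFiber hp x v)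

lemma hasSum_norm_rpow_fiberwise (D : lp (fun _ : J => E) p →L[ℝ] lp (fun _ : J => E) p)
    (v : lp (fun _ : X × J => E) p) :
    ∃ s ≤ (‖D‖ * ‖v‖) ^ p.toReal,
      HasSum (fun y : X × J => ‖D (lpFiber hp y.1 v) y.2‖ ^ p.toReal) s := by
  have hq := toReal_pos_of_ne_top hp
  have hle : ∀ x, ‖D (lpFiber hp x v)‖ ^ p.toReal ≤ ‖D‖ ^ p.toReal * ‖lpFiber hp x v‖ ^ p.toReal :=
    fun x => by
      rw [← Real.mul_rpow (norm_nonneg _) (norm_nonneg _)]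
      exact Real.rpow_le_rpow (norm_nonneg _) (D.le_opNorm _) hq.le
  have hv := (hasSum_norm_rpow_lpFiber hp v).mul_left (‖D‖ ^ p.toReal)
  have hsum : Summable fun x => ‖D (lpFiber hp x v)‖ ^ p.toReal :=
    .of_nonneg_of_le (fun _ => by positivity) hle hv.summable
  have hfib := fun x => lp.hasSum_norm hq (D (lpFiber hp x v))
  have hprod : Summable fun y : X × J => ‖D (lpFiber hp y.1 v) y.2‖ ^ p.toReal :=
    (summable_prod_of_nonneg fun _ => by positivity).mpr
      ⟨fun x => (hfib x).summable, by simpa only [fun x => (hfib x).tsum_eq] using hsum⟩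
  obtain ⟨s, hs⟩ := hprod
  refine ⟨s, ?_, hs⟩
  rw [Real.mul_rpow (norm_nonneg _) (norm_nonneg _)]
  exact hasSum_le hle (hs.prod_fiberwise hfib) hv

noncomputable def lpFiberwise (D : lp (fun _ : J => E) p →L[ℝ] lp (fun _ : J => E) p) :
    lp (fun _ : X × J => E) p →L[ℝ] lp (fun _ : X × J => E) p :=
  have hq := toReal_pos_of_ne_top hp
  LinearMap.mkContinuous
    { toFun := fun v => ⟨fun y => D (lpFiber hp y.1 v) y.2,
        memℓp_gen (hasSum_norm_rpow_fiberwise hp D v).choose_spec.2.summable⟩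
      map_add' := fun u v => lp.ext <| funext fun y => by
        simp only [map_add, lp.coeFn_add, Pi.add_apply]
      map_smul' := fun c v => lp.ext <| funext fun y => by
        simp only [map_smul, lp.coeFn_smul, Pi.smul_apply, RingHom.id_apply] }
    ‖D‖ fun v => by
      obtain ⟨s, hs, hsum⟩ := hasSum_norm_rpow_fiberwise hp D v
      exact lp.norm_le_of_tsum_le hq (by positivity) (hsum.tsum_eq.trans_le hs)

@[simp]
lemma lpFiberwise_apply (D : lp (fun _ : J => E) p →L[ℝ] lp (fun _ : J => E) p)
    (v : lp (fun _ : X × J => E) p) (y : X × J) :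
    lpFiberwise hp D v y = D (lpFiber hp y.1 v) y.2 := rfl

end Fiberwise

section BlockDiag

variable {X J I : Type*} {E : Type*} [NormedAddCommGroup E] [NormedSpace ℝ E]
  {p : ℝ≥0∞} [Fact (1 ≤ p)] (hp : p ≠ ∞) {τ : X → J → I} (hτ : Injective (uncurry τ))
  (D : lp (fun _ : J => E) p →L[ℝ] lp (fun _ : J => E) p)

/-- `D` on each block `ℓᵖ(range (τ x))`, the identity off the blocks: `1 - lpExtend ∘ lpComp` is
the coordinate projection onto the complement of `range (uncurry τ)`. -/
noncomputable def blockDiag : lp (fun _ : I => E) p →L[ℝ] lp (fun _ : I => E) p :=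
  lpExtend hp hτ ∘L lpFiberwise hp D ∘L lpComp hp hτ + (1 - lpExtend hp hτ ∘L lpComp hp hτ)

lemma blockDiag_apply_self (u : lp (fun _ : I => E) p) (x : X) (n : J) :
    blockDiag hp hτ D u (τ x n) = D (lpComp hp (hτ.of_uncurry x) u) n := by
  simp only [blockDiag, add_apply, sub_apply, ContinuousLinearMap.comp_apply, one_apply_eq_self,
    lp.coeFn_add, lp.coeFn_sub, Pi.add_apply, Pi.sub_apply]
  rw [← uncurry_apply_pair τ x n, lpExtend_apply_self, lpExtend_apply_self, lpComp_apply,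
    sub_self, add_zero]
  rfl

lemma blockDiag_apply_of_notMem_range (u : lp (fun _ : I => E) p) {k : I}
    (hk : k ∉ Set.range (uncurry τ)) : blockDiag hp hτ D u k = u k := by
  simp only [blockDiag, add_apply, sub_apply, ContinuousLinearMap.comp_apply, one_apply_eq_self,
    lp.coeFn_add, lp.coeFn_sub, Pi.add_apply, Pi.sub_apply,
    lpExtend_apply_of_notMem_range hp hτ _ hk, zero_add, sub_zero]

end BlockDiag

section Stochastic

variable {X J I : Type*} {p : ℝ≥0∞} [Fact (1 ≤ p)] (hp : p ≠ ∞) {τ : X → J → I}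
  (hτ : Injective (uncurry τ)) {D : lp (fun _ : J => ℝ) p →L[ℝ] lp (fun _ : J => ℝ) p}
include hp hτ

lemma isPositiveOp_blockDiag (hD : IsPositiveOp D) : IsPositiveOp (blockDiag hp hτ D) := by
  intro u hu k
  by_cases hk : k ∈ Set.range (uncurry τ)
  · obtain ⟨⟨x, n⟩, rfl⟩ := hk
    rw [uncurry_apply_pair, blockDiag_apply_self]
    exact hD _ (fun m => hu _) n
  · rw [blockDiag_apply_of_notMem_range hp hτ D u hk]
    exact hu k

lemma isRowStochastic_blockDiag (hD : IsRowStochastic D) :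
    IsRowStochastic (blockDiag hp hτ D) := by
  classical
  refine ⟨isPositiveOp_blockDiag hp hτ hD.1, fun k => ?_⟩
  by_cases hk : k ∈ Set.range (uncurry τ)
  · obtain ⟨⟨x, n⟩, rfl⟩ := hk
    simp only [uncurry_apply_pair, blockDiag_apply_self]
    refine ((hτ.of_uncurry x).hasSum_iff fun j hj => ?_).mp ?_
    · rw [lpComp_stdb_of_notMem_range hp _ hj, map_zero, lp.coeFn_zero, Pi.zero_apply]
    · simpa only [comp_def, lpComp_stdb_self] using hD.2 n
  · simp only [blockDiag_apply_of_notMem_range hp hτ D _ hk, stdb_apply]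
    simpa only [eq_comm] using hasSum_ite_eq k (1 : ℝ)

lemma blockDiag_stdb_of_notMem_range {j : I} (hj : j ∉ Set.range (uncurry τ)) :
    blockDiag hp hτ D (stdb p j) = stdb p j := by
  classical
  ext k
  by_cases hk : k ∈ Set.range (uncurry τ)
  · obtain ⟨⟨x, n⟩, rfl⟩ := hk
    rw [uncurry_apply_pair, blockDiag_apply_self, lpComp_stdb_of_notMem_range hp _
      (notMem_range_of_notMem_range_uncurry hj x), map_zero, stdb_apply, if_neg]
    · rfl
    · rintro rfl
      exact hj ⟨(x, n), rfl⟩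
  · exact blockDiag_apply_of_notMem_range hp hτ D _ hk

lemma blockDiag_stdb_apply_of_notMem_range {x : X} (m : J) {k : I}
    (hk : k ∉ Set.range (τ x)) : blockDiag hp hτ D (stdb p (τ x m)) k = 0 := by
  classical
  by_cases hk' : k ∈ Set.range (uncurry τ)
  · obtain ⟨⟨x', n⟩, rfl⟩ := hk'
    have hx : x' ≠ x := by
      rintro rfl
      exact hk ⟨n, rfl⟩
    rw [uncurry_apply_pair, blockDiag_apply_self, lpComp_stdb_of_notMem_range hp _
      (notMem_range_of_injective_uncurry hτ hx.symm m), map_zero]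
    rfl
  · rw [blockDiag_apply_of_notMem_range hp hτ D _ hk', stdb_apply, if_neg]
    rintro rfl
    exact hk' ⟨(x, m), rfl⟩

lemma isColumnStochastic_blockDiag (hD : IsColumnStochastic D) :
    IsColumnStochastic (blockDiag hp hτ D) := by
  classical
  refine ⟨isPositiveOp_blockDiag hp hτ hD.1, fun j => ?_⟩
  by_cases hj : j ∈ Set.range (uncurry τ)
  · obtain ⟨⟨x, m⟩, rfl⟩ := hj
    refine ((hτ.of_uncurry x).hasSum_iff fun k hk => ?_).mp ?_
    · exact blockDiag_stdb_apply_of_notMem_range hp hτ m hk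
    · simpa only [comp_def, uncurry_apply_pair, blockDiag_apply_self, lpComp_stdb_self]
        using hD.2 m
  · simp only [blockDiag_stdb_of_notMem_range hp hτ hj, stdb_apply]
    exact hasSum_ite_eq j (1 : ℝ)

lemma isDoublyStochastic_blockDiag (hD : IsDoublyStochastic D) :
    IsDoublyStochastic (blockDiag hp hτ D) :=
  ⟨isRowStochastic_blockDiag hp hτ hD.1, isColumnStochastic_blockDiag hp hτ hD.2⟩

end Stochastic

lemma preservesMajorization_lpExtend_comp_lpTensor {X I : Type*} {p : ℝ≥0∞} [Fact (1 ≤ p)]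
    (hp : p ≠ ∞) {τ : X → I → I} (hτ : Injective (uncurry τ)) (a : lp (fun _ : X => ℝ) p) :
    PreservesMajorization (lpExtend hp hτ ∘L lpTensor hp a) := by
  rintro f g ⟨D, hD, rfl⟩
  refine ⟨blockDiag hp hτ D, isDoublyStochastic_blockDiag hp hτ hD, ?_⟩
  ext k
  simp only [ContinuousLinearMap.comp_apply]
  by_cases hk : k ∈ Set.range (uncurry τ)
  · obtain ⟨⟨x, n⟩, rfl⟩ := hk
    rw [lpExtend_apply_self, lpTensor_apply, uncurry_apply_pair, blockDiag_apply_self,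
      lpComp_lpExtend_lpTensor, map_smul, lp.coeFn_smul, Pi.smul_apply, smul_eq_mul]
  · rw [blockDiag_apply_of_notMem_range hp hτ D _ hk, lpExtend_apply_of_notMem_range hp hτ _ hk,
      lpExtend_apply_of_notMem_range hp hτ _ hk]

theorem stmt16_general {I : Type*} (p : ℝ≥0∞) [Fact (1 ≤ p)] (hp : p ≠ ∞)
    (I₀ : Set I)
    (σ : I₀ → I → I) (hinj : ∀ i, Function.Injective (σ i))
    (hdisj : ∀ i₁ i₂ : I₀, i₁ ≠ i₂ → Disjoint (Set.range (σ i₁)) (Set.range (σ i₂)))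
    (α : I₀ → ℝ) (hα : Memℓp α p)
    (P : I₀ → lp (fun _ : I => ℝ) p →L[ℝ] lp (fun _ : I => ℝ) p)
    (hP : ∀ (i : I₀) (j : I), P i (stdb p j) = stdb p (σ i j)) :
    ∃ T : lp (fun _ : I => ℝ) p →L[ℝ] lp (fun _ : I => ℝ) p,
      HasSum (fun i : I₀ => α i • P i) T ∧ PreservesMajorization T := by
  have hσ : Injective (uncurry σ) :=
    injective_uncurry_of_pairwise_disjoint hinj fun i₁ i₂ h => hdisj i₁ i₂ h
  obtain rfl : P = fun i => lpExtend hp (hσ.of_uncurry i) :=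
    funext fun i => eq_lpExtend_of_apply_stdb hp _ (hP i)
  exact ⟨_, hasSum_smul_lpExtend hp hσ ⟨α, hα⟩,
    preservesMajorization_lpExtend_comp_lpTensor hp hσ _⟩

/-- For `I` infinite, a countable `I₀ ⊆ I`, injections `σ i : I → I` (`i ∈ I₀`) with pairwise
disjoint ranges, and `(α i) ∈ ℓᵖ(I₀)`, the operator `T = ∑_{i∈I₀} α i • P_{σ i}` is a
well-defined bounded operator preserving majorization. -/
theorem stmt16 {I : Type*} [Infinite I] (p : ℝ≥0∞) [Fact (1 ≤ p)] (hp : p ≠ ∞)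
    (I₀ : Set I) (hI₀ : I₀.Countable)
    (σ : I₀ → I → I) (hinj : ∀ i, Function.Injective (σ i))
    (hdisj : ∀ i₁ i₂ : I₀, i₁ ≠ i₂ → Disjoint (Set.range (σ i₁)) (Set.range (σ i₂)))
    (α : I₀ → ℝ) (hα : Memℓp α p)
    (P : I₀ → lp (fun _ : I => ℝ) p →L[ℝ] lp (fun _ : I => ℝ) p)
    (hP : ∀ (i : I₀) (j : I), P i (stdb p j) = stdb p (σ i j)) :
    ∃ T : lp (fun _ : I => ℝ) p →L[ℝ] lp (fun _ : I => ℝ) p,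
      HasSum (fun i : I₀ => α i • P i) T ∧ PreservesMajorization T :=
  stmt16_general p hp I₀ σ hinj hdisj α hα P hP
end

section
/- Let a,b ∈ ℝ and (a_i)_{i∈I}, (b_i)_{i∈I} be families of reals indexed by a countable set I. If for all α, β ∈ ℝ the number αa + βb belongs to {αa_i + βb_i ; i ∈ I}, then there exists i ∈ I with a = a_i and b = b_i. -/
open scoped ENNReal

/-- If `α a + β b ∈ {α a_i + β b_i ; i ∈ I}` for all reals `α, β`, with `I` countable,
then `a = a_i` and `b = b_i` for some `i`. -/
theorem stmt17 {I : Type*} [Countable I] (a b : ℝ) (aa bb : I → ℝ)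
    (h : ∀ α β : ℝ, ∃ i : I, α * a + β * b = α * aa i + β * bb i) :
    ∃ i : I, a = aa i ∧ b = bb i := by
  choose f hf using fun α => h α 1
  have hninj : ¬ Function.Injective f := fun hinj =>
    (not_countable_iff.mpr (inferInstance : Uncountable ℝ)) hinj.countable
  rw [Function.not_injective_iff] at hninj
  obtain ⟨α₁, α₂, hfe, hne⟩ := hninj
  refine ⟨f α₁, ?_, ?_⟩
  · have h1 := hf α₁
    have h2 := hf α₂
    rw [hfe] at h1
    have : (α₁ - α₂) * a = (α₁ - α₂) * aa (f α₂) := by ring_nf; ring_nf at h1 h2; linarith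
    have := mul_left_cancel₀ (sub_ne_zero.mpr hne) this
    rw [hfe]; exact this
  · have h1 := hf α₁
    have ha : a = aa (f α₁) := by
      have h2 := hf α₂
      rw [hfe] at h1
      have : (α₁ - α₂) * a = (α₁ - α₂) * aa (f α₂) := by ring_nf; ring_nf at h1 h2; linarith
      have := mul_left_cancel₀ (sub_ne_zero.mpr hne) this
      rw [hfe]; exact this
    rw [ha] at h1; linarith
end
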